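/- arXiv:1709.03932 — 3 statements merged into one kernel-verified Lean document; each statement's English description precedes it below -/
import Mathlib

section
/- Let m ≥ 1 and let n_1, …, n_m be positive integers with n = n_1 + … + n_m ≥ 2 and e = Σ_{1≤i<j≤m} n_i n_j. Then for every induced subgraph H of the complete m-partite graph K_{n_1,…,n_m} with at least 2 vertices, one has ⌈|E(H)| / (|V(H)| − 1)⌉ ≤ ⌈e / (n − 1)⌉; that is, the maximum of ⌈|E(H)|/(|V(H)|−1)⌉ over induced subgraphs H is attained at H = K_{n_1,…,n_m} itself. -/
/-!
Write `K_x` for the complete multipartite graph with part sizes `x`. An induced subgraph of `K_n`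
is again of the form `K_k` with `k ≤ n` pointwise, so it suffices that the ratio
`r(x) = |E(K_x)| / (|x| - 1)` is monotone in `x`; enlarge one part at a time. Adding `d` vertices
to part `i` adds `d (|x| - x i)` edges, and `r(x) ≤ |x| - x i` (the degree of a vertex of part `i`)
because `t ≤ t ^ 2` for every natural number `t`. By the mediant inequality the ratio cannot drop.
-/

open SimpleGraph Finset

section CrossPairs

variable {ι : Type*} [Fintype ι]

theorem sum_apply_update {α M : Type*} [DecidableEq ι] [AddCommGroup M] (x : ι → α) (i : ι)
    (b : α) (f : α → M) :
    ∑ j, f (Function.update x i b j) = ∑ j, f (x j) + (f b - f (x i)) := by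
  rw [Fintype.sum_eq_add_sum_compl i, Fintype.sum_eq_add_sum_compl i (fun j => f (x j)),
    Function.update_self]
  have hrest : ∑ j ∈ {i}ᶜ, f (Function.update x i b j) = ∑ j ∈ {i}ᶜ, f (x j) :=
    sum_congr rfl fun j hj => by rw [Function.update_of_ne (by simpa using hj)]
  rw [hrest]
  abel

/-- Ordered pairs of vertices in different parts of `K_x`: twice its number of edges. -/
def crossPairs (x : ι → ℕ) : ℕ := ∑ i, x i * (∑ j, x j - x i)

theorem cast_crossPairs {R : Type*} [CommRing R] (x : ι → ℕ) :
    (crossPairs x : R) = (∑ i, (x i : R)) ^ 2 - ∑ i, (x i : R) ^ 2 := by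
  have hle (i : ι) : x i ≤ ∑ j, x j := single_le_sum (fun _ _ => Nat.zero_le _) (mem_univ i)
  simp only [crossPairs, Nat.cast_sum, Nat.cast_mul, Nat.cast_sub (hle _), mul_sub,
    sum_sub_distrib, ← sum_mul, sq]

theorem two_mul_sum_sum_Ioi_mul [LinearOrder ι] [LocallyFiniteOrderTop ι]
    [LocallyFiniteOrderBot ι] (x : ι → ℕ) :
    2 * ∑ i, ∑ j ∈ Ioi i, x i * x j = crossPairs x := by
  classical
  have hcompl (i : ι) : ∑ j ∈ {i}ᶜ, x j = ∑ j, x j - x i := by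
    rw [Fintype.sum_eq_add_sum_compl i x, Nat.add_sub_cancel_left]
  calc 2 * ∑ i, ∑ j ∈ Ioi i, x i * x j = ∑ i, ∑ j ∈ Ioi i, (x j * x i + x i * x j) := by
        simp only [mul_sum]
        exact sum_congr rfl fun i _ => sum_congr rfl fun j _ => by ring
    _ = ∑ i, ∑ j ∈ {i}ᶜ, x j * x i := sum_sum_Ioi_add_eq_sum_sum_off_diag _
    _ = crossPairs x := sum_congr rfl fun i _ => by rw [← sum_mul, hcompl, mul_comm]

theorem cast_crossPairs_update {R : Type*} [CommRing R] [DecidableEq ι] (x : ι → ℕ) (i : ι)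
    (b : ℕ) : (crossPairs (Function.update x i b) : R) =
      crossPairs x + 2 * (b - x i) * (∑ j, (x j : R) - x i) := by
  rw [cast_crossPairs, cast_crossPairs, sum_apply_update x i b (fun a : ℕ => (a : R)),
    sum_apply_update x i b (fun a : ℕ => (a : R) ^ 2)]
  ring

theorem cast_crossPairs_le {R : Type*} [CommRing R] [LinearOrder R] [IsStrictOrderedRing R]
    (x : ι → ℕ) (i : ι) :
    (crossPairs x : R) ≤ 2 * (∑ j, (x j : R) - 1) * (∑ j, (x j : R) - x i) := by
  classical
  set t := ∑ j ∈ {i}ᶜ, x j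
  have ht : (t : R) ≤ t ^ 2 := by exact_mod_cast Nat.le_self_pow two_ne_zero t
  have hq : (t : R) ≤ ∑ j ∈ {i}ᶜ, (x j : R) ^ 2 := by
    exact_mod_cast sum_le_sum fun j _ => Nat.le_self_pow two_ne_zero (x j)
  push_cast [t] at ht hq
  rw [cast_crossPairs, Fintype.sum_eq_add_sum_compl i,
    Fintype.sum_eq_add_sum_compl i (fun j => (x j : R) ^ 2)]
  nlinarith

/-- `|E(K_x)| / (|V(K_x)| - 1)`, the quantity in Nash-Williams' formula for the arboricity. -/
def arboricityRatio (x : ι → ℕ) : ℚ := crossPairs x / (2 * (∑ i, (x i : ℚ) - 1))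

theorem div_eq_arboricityRatio {x : ι → ℕ} {E : ℕ} (hE : 2 * E = crossPairs x) :
    (E : ℚ) / ((∑ i, x i : ℕ) - 1) = arboricityRatio x := by
  rw [arboricityRatio, ← hE]
  push_cast
  rw [mul_div_mul_left _ _ two_ne_zero]

theorem arboricityRatio_le_update [DecidableEq ι] {x : ι → ℕ} (hx : 2 ≤ ∑ j, x j) {i : ι}
    {b : ℕ} (hb : x i ≤ b) : arboricityRatio x ≤ arboricityRatio (Function.update x i b) := by
  have hK : (2 : ℚ) ≤ ∑ j, (x j : ℚ) := by exact_mod_cast hx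
  have hd : (x i : ℚ) ≤ b := by exact_mod_cast hb
  have hP := cast_crossPairs_le (R := ℚ) x i
  rw [arboricityRatio, arboricityRatio, cast_crossPairs_update,
    sum_apply_update x i b (fun a : ℕ => (a : ℚ)), div_le_div_iff₀ (by linarith) (by linarith)]
  nlinarith [mul_nonneg (sub_nonneg.2 hd) (sub_nonneg.2 hP)]

theorem arboricityRatio_mono {x y : ι → ℕ} (hxy : x ≤ y) (hx : 2 ≤ ∑ i, x i) :
    arboricityRatio x ≤ arboricityRatio y := by
  classical
  suffices ∀ s : Finset ι, arboricityRatio x ≤ arboricityRatio (s.piecewise y x) by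
    simpa using this univ
  intro s
  induction s using Finset.induction_on with
  | empty => simp
  | insert a s ha ih =>
    rw [piecewise_insert]
    refine ih.trans (arboricityRatio_le_update ?_ ?_)
    · exact hx.trans (sum_le_sum fun i _ => le_piecewise_of_le_of_le _ hxy le_rfl i)
    · rw [piecewise_eq_of_notMem _ _ _ ha]
      exact hxy a

end CrossPairs

namespace SimpleGraph.completeMultipartiteGraph

variable {ι : Type*} {V : ι → Type*}

def induceIso (s : Set (Σ i, V i)) :
    (completeMultipartiteGraph V).induce s ≃g
      completeMultipartiteGraph fun i => {a : V i // ⟨i, a⟩ ∈ s} where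
  toFun v := ⟨v.1.1, v.1.2, v.2⟩
  invFun w := ⟨⟨w.1, w.2.1⟩, w.2.2⟩
  left_inv _ := rfl
  right_inv _ := rfl
  map_rel_iff' := Iff.rfl

variable [Fintype ι] [∀ i, Finite (V i)]

theorem degree_eq (v : Σ i, V i) [Fintype ((completeMultipartiteGraph V).neighborSet v)] :
    (completeMultipartiteGraph V).degree v = ∑ i, Nat.card (V i) - Nat.card (V v.1) := by
  classical
  have (i : ι) : Fintype (V i) := Fintype.ofFinite (V i)
  have hnbr : (completeMultipartiteGraph V).neighborSet v ≃ {w : Σ i, V i // ¬ w.1 = v.1} :=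
    Equiv.subtypeEquivRight fun w => ne_comm
  simp only [← card_neighborSet_eq_degree, Fintype.card_congr hnbr, Fintype.card_subtype_compl,
    Fintype.card_congr (Equiv.sigmaSubtype v.1), Fintype.card_sigma, Nat.card_eq_fintype_card]

theorem two_mul_ncard_edgeSet :
    2 * (completeMultipartiteGraph V).edgeSet.ncard = crossPairs fun i => Nat.card (V i) := by
  classical
  have (i : ι) : Fintype (V i) := Fintype.ofFinite (V i)
  rw [← coe_edgeFinset, Set.ncard_coe_finset, ← sum_degrees_eq_twice_card_edges,
    Fintype.sum_sigma, crossPairs]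
  refine sum_congr rfl fun i _ => ?_
  simp only [degree_eq, sum_const, card_univ, smul_eq_mul, Nat.card_eq_fintype_card]

theorem two_mul_ncard_edgeSet_induce (s : Set (Σ i, V i)) :
    2 * ((completeMultipartiteGraph V).induce s).edgeSet.ncard =
      crossPairs fun i => Nat.card {a : V i // ⟨i, a⟩ ∈ s} := by
  rw [← Nat.card_coe_set_eq, Nat.card_congr (induceIso s).mapEdgeSet, Nat.card_coe_set_eq,
    two_mul_ncard_edgeSet]

theorem ncard_eq_sum_card_parts (s : Set (Σ i, V i)) :
    s.ncard = ∑ i, Nat.card {a : V i // ⟨i, a⟩ ∈ s} := by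
  rw [← Nat.card_coe_set_eq, Nat.card_congr (induceIso s).toEquiv, Nat.card_sigma]

end SimpleGraph.completeMultipartiteGraph

theorem induced_density_le_completeMultipartite_general (m : ℕ)
    (nn : Fin m → ℕ)
    (n : ℕ) (hn : n = ∑ i, nn i)
    (e : ℕ) (he : e = ∑ i, ∑ j ∈ Finset.Ioi i, nn i * nn j)
    (s : Set (Σ i : Fin m, Fin (nn i))) (hs : 2 ≤ s.ncard) :
    ⌈((((completeMultipartiteGraph fun i => Fin (nn i)).induce s).edgeSet.ncard : ℚ)) /
        ((s.ncard : ℚ) - 1)⌉₊ ≤ ⌈(e : ℚ) / ((n : ℚ) - 1)⌉₊ := by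
  set k : Fin m → ℕ := fun i => Nat.card {a : Fin (nn i) // ⟨i, a⟩ ∈ s}
  have hE := completeMultipartiteGraph.two_mul_ncard_edgeSet_induce s
  have hK : s.ncard = ∑ i, k i := completeMultipartiteGraph.ncard_eq_sum_card_parts s
  have he2 : 2 * e = crossPairs nn := he ▸ two_mul_sum_sum_Ioi_mul nn
  have hkn : k ≤ nn := fun i => (Finite.card_subtype_le _).trans (Nat.card_fin _).le
  refine Nat.ceil_le_ceil ?_
  calc _ = arboricityRatio k := by rw [hK]; exact div_eq_arboricityRatio hE
    _ ≤ arboricityRatio nn := arboricityRatio_mono hkn (hK ▸ hs)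
    _ = _ := by rw [hn]; exact (div_eq_arboricityRatio he2).symm

/-- For every induced subgraph `H` (on a vertex set `s` with at least 2 vertices)
of the complete `m`-partite graph `K_{n_1,…,n_m}`, one has
`⌈|E(H)|/(|V(H)|-1)⌉ ≤ ⌈e/(n-1)⌉`. -/
theorem induced_density_le_completeMultipartite (m : ℕ) (hm : 1 ≤ m)
    (nn : Fin m → ℕ) (hpos : ∀ i, 0 < nn i)
    (n : ℕ) (hn : n = ∑ i, nn i) (hn2 : 2 ≤ n)
    (e : ℕ) (he : e = ∑ i, ∑ j ∈ Finset.Ioi i, nn i * nn j)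
    (s : Set (Σ i : Fin m, Fin (nn i))) (hs : 2 ≤ s.ncard) :
    ⌈((((completeMultipartiteGraph fun i => Fin (nn i)).induce s).edgeSet.ncard : ℚ)) /
        ((s.ncard : ℚ) - 1)⌉₊ ≤ ⌈(e : ℚ) / ((n : ℚ) - 1)⌉₊ :=
  induced_density_le_completeMultipartite_general m nn n hn e he s hs
end

section
/- Let m ≥ 1 and let k_1, …, k_m and n_1, …, n_m be natural numbers with k_i ≤ n_i for all i, with Σ k_i ≥ 2 and n = Σ n_i. Then (Σ_{1≤i<j≤m} k_i k_j) · (n − 1) ≤ (Σ_{1≤i<j≤m} n_i n_j) · ((Σ k_i) − 1). (Equivalently, the edge density |E(H)|/(|V(H)|−1) of an induced subgraph H of the complete m-partite graph K_{n_1,…,n_m} is at most e/(n−1).) -/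
/-!
Write `e(k) = Σ_{i<j} k_i k_j` and `s(k) = Σ k_i`. The claim says that `e(k) / (s(k) - 1)` is
monotone in `k`, so it suffices to raise a single coordinate `k_i` by one. This raises `e` by
`s - k_i`, and the step reduces to `e(k) ≤ (s - k_i)(s - 1)`, which follows from
`2 e(k) + Σ k_j² = s²` together with `k_j ≤ k_j²`.
-/

open Finset Function

theorem sum_comp_update_add {ι β M : Type*} [Fintype ι] [DecidableEq ι] [AddCommMonoid M]
    (g : β → M) (f : ι → β) (i : ι) (b : β) :
    ∑ j, g (update f i b j) + g (f i) = ∑ j, g (f j) + g b := by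
  have h := sum_update_of_mem (mem_univ i) (g ∘ f) (g b)
  rw [← comp_update] at h
  simp only [comp_apply] at h
  rw [h, sdiff_singleton_eq_erase, ← add_sum_erase univ (fun j => g (f j)) (mem_univ i)]
  abel

theorem sum_update_succ {ι : Type*} [Fintype ι] [DecidableEq ι] (k : ι → ℕ) (i : ι) :
    ∑ j, update k i (k i + 1) j = ∑ j, k j + 1 := by
  have h := sum_comp_update_add id k i (k i + 1)
  simp only [id] at h
  omega

section

variable {ι : Type*} [Fintype ι] [LinearOrder ι] [LocallyFiniteOrderTop ι]

def multipartiteEdges (k : ι → ℕ) : ℕ := ∑ i, ∑ j ∈ Ioi i, k i * k j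

variable [LocallyFiniteOrderBot ι]

theorem two_mul_multipartiteEdges_add_sum_sq (k : ι → ℕ) :
    2 * multipartiteEdges k + ∑ i, k i ^ 2 = (∑ i, k i) ^ 2 := by
  calc 2 * multipartiteEdges k + ∑ i, k i ^ 2
      = ∑ i, ∑ j ∈ Ioi i, (k j * k i + k i * k j) + ∑ i, k i * k i := by
        simp only [multipartiteEdges, two_mul, sum_add_distrib, mul_comm, sq]
    _ = ∑ i, ∑ j, k j * k i := by
        rw [sum_sum_Ioi_add_eq_sum_sum_off_diag, ← sum_add_distrib]
        refine sum_congr rfl fun i _ => ?_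
        rw [← sum_compl_add_sum {i}, sum_singleton]
    _ = (∑ i, k i) ^ 2 := by rw [sq, sum_mul_sum, sum_comm]

theorem multipartiteEdges_le (k : ι → ℕ) (i : ι) :
    multipartiteEdges k ≤ (∑ j, k j - k i) * (∑ j, k j - 1) := by
  have hsq := two_mul_multipartiteEdges_add_sum_sq k
  have hrest : ∑ j ∈ univ.erase i, k j ≤ ∑ j ∈ univ.erase i, k j ^ 2 :=
    sum_le_sum fun j _ => Nat.le_self_pow two_ne_zero (k j)
  rw [← add_sum_erase univ k (mem_univ i), ← add_sum_erase univ (fun j => k j ^ 2) (mem_univ i)]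
    at hsq
  rw [← add_sum_erase univ k (mem_univ i), Nat.add_sub_cancel_left]
  set R := ∑ j ∈ univ.erase i, k j
  have hR : R ≤ R ^ 2 := Nat.le_self_pow two_ne_zero R
  rcases Nat.eq_zero_or_pos R with h0 | hpos
  · rw [h0, add_zero] at hsq
    rw [h0, zero_mul]
    linarith
  · zify [show 1 ≤ k i + R by omega] at *
    nlinarith

variable [DecidableEq ι]

theorem multipartiteEdges_update_succ_add (k : ι → ℕ) (i : ι) :
    multipartiteEdges (update k i (k i + 1)) + k i = multipartiteEdges k + ∑ j, k j := by
  have hsq := sum_comp_update_add (· ^ 2) k i (k i + 1)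
  have h := two_mul_multipartiteEdges_add_sum_sq k
  have h' := two_mul_multipartiteEdges_add_sum_sq (update k i (k i + 1))
  rw [sum_update_succ] at h'
  linarith

theorem multipartiteEdges_mul_le_update_succ (k : ι → ℕ) (i : ι) :
    multipartiteEdges k * ∑ j, k j ≤
      multipartiteEdges (update k i (k i + 1)) * (∑ j, k j - 1) := by
  have hstep := multipartiteEdges_update_succ_add k i
  have hle := multipartiteEdges_le k i
  have hki : k i ≤ ∑ j, k j := single_le_sum (fun j _ => Nat.zero_le (k j)) (mem_univ i)
  rcases Nat.eq_zero_or_pos (∑ j, k j) with h0 | hpos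
  · simp [h0]
  · zify [hpos, hki] at *
    nlinarith

theorem multipartiteEdges_mul_le_of_le {k n : ι → ℕ} (h : k ≤ n) :
    multipartiteEdges k * (∑ i, n i - 1) ≤ multipartiteEdges n * (∑ i, k i - 1) := by
  induction hd : ∑ i, n i - ∑ i, k i generalizing k with
  | zero =>
    obtain rfl : k = n := h.eq_of_not_lt fun hlt => by
      have : ∑ i, k i < ∑ i, n i := Fintype.sum_strictMono hlt
      omega
    rfl
  | succ d ih =>
    obtain ⟨i, hi⟩ : ∃ i, k i < n i := by
      by_contra! hge
      obtain rfl : k = n := le_antisymm h hge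
      omega
    set k' := update k i (k i + 1)
    have hrec := ih (update_le_iff.2 ⟨hi, fun j _ => h j⟩) (by rw [sum_update_succ]; omega)
    rw [sum_update_succ, Nat.add_sub_cancel] at hrec
    rcases Nat.eq_zero_or_pos (∑ j, k j) with h0 | hpos
    · have := multipartiteEdges_le k i
      simp_all
    · refine Nat.le_of_mul_le_mul_right ?_ hpos
      calc multipartiteEdges k * (∑ j, n j - 1) * ∑ j, k j
          = multipartiteEdges k * (∑ j, k j) * (∑ j, n j - 1) := by ring
        _ ≤ multipartiteEdges k' * (∑ j, k j - 1) * (∑ j, n j - 1) :=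
          Nat.mul_le_mul_right _ (multipartiteEdges_mul_le_update_succ k i)
        _ = multipartiteEdges k' * (∑ j, n j - 1) * (∑ j, k j - 1) := by ring
        _ ≤ multipartiteEdges n * (∑ j, k j) * (∑ j, k j - 1) := Nat.mul_le_mul_right _ hrec
        _ = multipartiteEdges n * (∑ j, k j - 1) * ∑ j, k j := by ring

end

theorem multipartite_density_ineq_general (m : ℕ) (k nn : Fin m → ℕ)
    (hk : ∀ i, k i ≤ nn i) :
    (∑ i, ∑ j ∈ Finset.Ioi i, k i * k j) * ((∑ i, nn i) - 1) ≤
      (∑ i, ∑ j ∈ Finset.Ioi i, nn i * nn j) * ((∑ i, k i) - 1) :=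
  multipartiteEdges_mul_le_of_le hk

/-- If `k_i ≤ n_i` for all `i` and `Σ k_i ≥ 2`, then
`(Σ_{i<j} k_i k_j) · (n − 1) ≤ (Σ_{i<j} n_i n_j) · ((Σ k_i) − 1)`,
where `n = Σ n_i`. -/
theorem multipartite_density_ineq (m : ℕ) (hm : 1 ≤ m) (k nn : Fin m → ℕ)
    (hk : ∀ i, k i ≤ nn i) (hksum : 2 ≤ ∑ i, k i) :
    (∑ i, ∑ j ∈ Finset.Ioi i, k i * k j) * ((∑ i, nn i) - 1) ≤
      (∑ i, ∑ j ∈ Finset.Ioi i, nn i * nn j) * ((∑ i, k i) - 1) :=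
  multipartite_density_ineq_general m k nn hk
end

section
/- Let m ≥ 1 and let n_1, …, n_m be positive integers with n = n_1 + … + n_m ≥ 2 and e = Σ_{1≤i<j≤m} n_i n_j. Then the edge set of the complete m-partite graph K_{2n_1, 2n_2, …, 2n_m} can be partitioned into ⌈e/(n−1)⌉ parts, each of which induces a bipartite (hence triangle-free) subgraph. -/
open SimpleGraph Finset

/-!
A complete multipartite graph with `m` parts is `m`-colourable, and `m ≤ 2 ^ k` for
`k = ⌈e / (n - 1)⌉` since `(m - 1) n ≤ 2 e`. Read the colours as `k`-bit strings and put each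
edge into the part indexed by the first bit in which the colours of its endpoints differ: that
bit is then a proper 2-colouring of the part.
-/

namespace SimpleGraph

variable {V ι β : Type*} [LinearOrder ι]

def firstDiffSubgraph (G : SimpleGraph V) (c : V → ι → β) (t : ι) : SimpleGraph V where
  Adj v w := G.Adj v w ∧ c v t ≠ c w t ∧ ∀ s < t, c v s = c w s
  symm.symm _ _ h := ⟨h.1.symm, h.2.1.symm, fun s hs => (h.2.2 s hs).symm⟩
  loopless.irrefl _ h := h.2.1 rfl

variable {G : SimpleGraph V} {c : V → ι → β}

lemma disjoint_firstDiffSubgraph {t t' : ι} (h : t ≠ t') :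
    Disjoint (G.firstDiffSubgraph c t) (G.firstDiffSubgraph c t') := by
  rw [disjoint_left]
  rintro v w ⟨-, hne, hagree⟩ ⟨-, hne', hagree'⟩
  rcases h.lt_or_gt with hlt | hlt
  · exact hne (hagree' t hlt)
  · exact hne' (hagree t' hlt)

lemma iSup_firstDiffSubgraph [WellFoundedLT ι] (hc : ∀ ⦃v w⦄, G.Adj v w → c v ≠ c w) :
    ⨆ t, G.firstDiffSubgraph c t = G := by
  ext v w
  rw [iSup_adj]
  refine ⟨fun ⟨_, h⟩ => h.1, fun hvw => ?_⟩
  obtain ⟨t, hne, hmin⟩ :=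
    wellFounded_lt.has_min {t | c v t ≠ c w t} (Function.ne_iff.mp (hc hvw))
  exact ⟨t, hvw, hne, fun s hs => not_not.mp fun h => hmin s h hs⟩

def firstDiffSubgraph.coloring (G : SimpleGraph V) (c : V → ι → β) (t : ι) :
    (G.firstDiffSubgraph c t).Coloring β :=
  Coloring.mk (fun v => c v t) fun h => h.2.1

theorem exists_edge_partition_colorable_of_colorable_pow {b k : ℕ} (hG : G.Colorable (b ^ k)) :
    ∃ P : Fin k → Set (Sym2 V), (Pairwise fun i j => Disjoint (P i) (P j)) ∧
      (⋃ i, P i) = G.edgeSet ∧ ∀ i, (fromEdgeSet (P i)).Colorable b := by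
  obtain ⟨C⟩ := hG
  let c : V → Fin k → Fin b := fun v => finFunctionFinEquiv.symm (C v)
  have hc : ∀ ⦃v w⦄, G.Adj v w → c v ≠ c w := fun _ _ h =>
    finFunctionFinEquiv.symm.injective.ne (C.valid h)
  refine ⟨fun t => (G.firstDiffSubgraph c t).edgeSet,
    fun _ _ h => disjoint_edgeSet.2 (disjoint_firstDiffSubgraph h), ?_, fun t => ?_⟩
  · rw [← edgeSet_iSup, iSup_firstDiffSubgraph hc]
  · rw [fromEdgeSet_edgeSet]
    exact ⟨firstDiffSubgraph.coloring G c t⟩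

end SimpleGraph

lemma card_sub_one_mul_sum_le_two_mul_sum_sum_Ioi_mul {α : Type*} [Fintype α] [LinearOrder α]
    [LocallyFiniteOrderTop α] [LocallyFiniteOrderBot α] (a : α → ℕ) (ha : ∀ i, 0 < a i) :
    (Fintype.card α - 1) * ∑ i, a i ≤ 2 * ∑ i, ∑ j ∈ Ioi i, a i * a j := by
  have hoff : 2 * ∑ i, ∑ j ∈ Ioi i, a i * a j = ∑ i, ∑ j ∈ {i}ᶜ, a j * a i := by
    rw [← sum_sum_Ioi_add_eq_sum_sum_off_diag, mul_sum]
    refine sum_congr rfl fun i _ => ?_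
    rw [mul_sum]
    exact sum_congr rfl fun j _ => by ring
  rw [hoff, mul_sum]
  refine sum_le_sum fun i _ => ?_
  calc (Fintype.card α - 1) * a i = ∑ _j ∈ ({i}ᶜ : Finset α), a i := by simp [card_compl]
    _ ≤ ∑ j ∈ {i}ᶜ, a j * a i := sum_le_sum fun j _ => Nat.le_mul_of_pos_left _ (ha j)

lemma le_natCeil_div_mul (a b : ℕ) (hb : 0 < b) : a ≤ ⌈(a : ℚ) / b⌉₊ * b := by
  have h := Nat.le_ceil ((a : ℚ) / b)
  rw [div_le_iff₀ (by exact_mod_cast hb)] at h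
  exact_mod_cast h

lemma le_two_pow_of_sub_one_mul_le {m n k : ℕ} (hn : 0 < n)
    (h : (m - 1) * n ≤ 2 * (k * (n - 1))) : m ≤ 2 ^ k := by
  rcases Nat.eq_zero_or_pos k with rfl | hk
  · rw [zero_mul, mul_zero, Nat.le_zero, mul_eq_zero] at h
    omega
  have hlt : (m - 1) * n < 2 * k * n := by
    calc (m - 1) * n ≤ 2 * (k * (n - 1)) := h
      _ < 2 * k * n := by
        rw [← mul_assoc]
        exact Nat.mul_lt_mul_of_pos_left (by omega) (by omega)
  have h2k : 2 * k ≤ 2 ^ k := by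
    obtain ⟨j, rfl⟩ := Nat.exists_eq_add_of_le' hk
    rw [pow_succ]
    have := Nat.lt_two_pow_self (n := j)
    omega
  have := Nat.lt_of_mul_lt_mul_right hlt
  omega

theorem completeMultipartite_even_bipartite_partition_general (m : ℕ)
    (nn : Fin m → ℕ) (hpos : ∀ i, 0 < nn i)
    (n : ℕ) (hn : n = ∑ i, nn i) (hn2 : 2 ≤ n)
    (e : ℕ) (he : e = ∑ i, ∑ j ∈ Finset.Ioi i, nn i * nn j) :
    ∃ P : Fin ⌈(e : ℚ) / ((n : ℚ) - 1)⌉₊ → Set (Sym2 (Σ i : Fin m, Fin (2 * nn i))),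
      (Pairwise fun i j => Disjoint (P i) (P j)) ∧
      (⋃ i, P i) = (completeMultipartiteGraph fun i : Fin m => Fin (2 * nn i)).edgeSet ∧
      ∀ i, (SimpleGraph.fromEdgeSet (P i)).Colorable 2 := by
  refine exists_edge_partition_colorable_of_colorable_pow
    ((completeMultipartiteGraph.colorable _).mono ?_)
  rw [Fintype.card_fin]
  refine le_two_pow_of_sub_one_mul_le (n := n) (by omega) ?_
  calc (m - 1) * n ≤ 2 * e := by
        simpa [hn, he] using card_sub_one_mul_sum_le_two_mul_sum_sum_Ioi_mul nn hpos
    _ ≤ 2 * (⌈(e : ℚ) / ((n : ℚ) - 1)⌉₊ * (n - 1)) := by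
        rw [← Nat.cast_pred (by omega)]
        gcongr
        exact le_natCeil_div_mul e (n - 1) (by omega)

/-- The edge set of the complete `m`-partite graph `K_{2n_1,…,2n_m}` can be
partitioned into `⌈e/(n-1)⌉` parts, each inducing a bipartite (2-colorable)
subgraph, where `n = Σ n_i` and `e = Σ_{i<j} n_i n_j`. -/
theorem completeMultipartite_even_bipartite_partition (m : ℕ) (hm : 1 ≤ m)
    (nn : Fin m → ℕ) (hpos : ∀ i, 0 < nn i)
    (n : ℕ) (hn : n = ∑ i, nn i) (hn2 : 2 ≤ n)
    (e : ℕ) (he : e = ∑ i, ∑ j ∈ Finset.Ioi i, nn i * nn j) :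
    ∃ P : Fin ⌈(e : ℚ) / ((n : ℚ) - 1)⌉₊ → Set (Sym2 (Σ i : Fin m, Fin (2 * nn i))),
      (Pairwise fun i j => Disjoint (P i) (P j)) ∧
      (⋃ i, P i) = (completeMultipartiteGraph fun i : Fin m => Fin (2 * nn i)).edgeSet ∧
      ∀ i, (SimpleGraph.fromEdgeSet (P i)).Colorable 2 :=
  completeMultipartite_even_bipartite_partition_general m nn hpos n hn hn2 e he
end
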